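/- Let T ∈ B(H) be left invertible and expansive (β₁(T) ≥ 0). Then for every x ∈ H, Σ_{i=1}^∞ ⟨β₁(T) L_T^i x, L_T^i x⟩ ≤ ‖x‖², i.e., Σ_{i=1}^∞ (L_T*)^i β₁(T) L_T^i ≤ I. -/

import Mathlib

/-!
`P = T L_T` is the orthogonal projection onto the range of `T`, so `‖T L_T y‖ ≤ ‖y‖`. With
`y_i = L_T^i x`, the `i`-th term equals `‖T y_{i+1}‖² - ‖y_{i+1}‖² = ‖P y_i‖² - ‖y_{i+1}‖²`,
which is nonnegative by expansivity and at most `‖y_i‖² - ‖y_{i+1}‖²`; the partial sums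
telescope to at most `‖x‖²`.
-/

open ContinuousLinearMap

/-- The canonical left inverse `L_T = (T*T)⁻¹ T*` of a left invertible operator `T`. -/
noncomputable def leftInv {H : Type*} [NormedAddCommGroup H] [InnerProductSpace ℂ H]
    [CompleteSpace H] (T : H →L[ℂ] H) : H →L[ℂ] H :=
  Ring.inverse (adjoint T * T) * adjoint T

theorem Real.tsum_le_of_le_sub_succ {f g : ℕ → ℝ} (hf : ∀ i, 0 ≤ f i) (hg : ∀ i, 0 ≤ g i)
    (hfg : ∀ i, f i ≤ g i - g (i + 1)) : ∑' i, f i ≤ g 0 := by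
  refine Real.tsum_le_of_sum_range_le hf fun n => ?_
  calc ∑ i ∈ Finset.range n, f i ≤ ∑ i ∈ Finset.range n, (g i - g (i + 1)) :=
        Finset.sum_le_sum fun i _ => hfg i
    _ = g 0 - g n := Finset.sum_range_sub' g n
    _ ≤ g 0 := sub_le_self _ (hg n)

theorem isStarProjection_mul_inverse_star_mul_self_mul_star {R : Type*} [Ring R] [StarRing R]
    (a : R) : IsStarProjection (a * Ring.inverse (star a * a) * star a) := by
  by_cases ha : IsUnit (star a * a)
  · refine ⟨?_, ?_⟩
    · change _ * _ = _
      calc a * Ring.inverse (star a * a) * star a * (a * Ring.inverse (star a * a) * star a)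
          = a * (Ring.inverse (star a * a) * (star a * a)) * Ring.inverse (star a * a) * star a :=
            by noncomm_ring
        _ = a * Ring.inverse (star a * a) * star a := by
            rw [Ring.inverse_mul_cancel _ ha, mul_one]
    · simp only [IsSelfAdjoint, star_mul, star_star, ← Ring.inverse_star, mul_assoc]
  · simp [Ring.inverse_non_unit _ ha, IsStarProjection.zero]

theorem norm_apply_leftInv_apply_le {H : Type*} [NormedAddCommGroup H] [InnerProductSpace ℂ H]
    [CompleteSpace H] (T : H →L[ℂ] H) (y : H) : ‖T (leftInv T y)‖ ≤ ‖y‖ := by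
  have hP : IsStarProjection (T * leftInv T) := by
    simpa only [leftInv, ← star_eq_adjoint, mul_assoc] using
      isStarProjection_mul_inverse_star_mul_self_mul_star T
  calc ‖T (leftInv T y)‖ = ‖(T * leftInv T) y‖ := rfl
    _ ≤ ‖T * leftInv T‖ * ‖y‖ := le_opNorm _ _
    _ ≤ ‖y‖ := mul_le_of_le_one_left (norm_nonneg y) (hP.norm_le _)

theorem re_inner_adjoint_mul_self_sub_one_apply {𝕜 H : Type*} [RCLike 𝕜] [NormedAddCommGroup H]
    [InnerProductSpace 𝕜 H] [CompleteSpace H] (T : H →L[𝕜] H) (y : H) :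
    RCLike.re (inner 𝕜 ((adjoint T * T - 1) y) y) = ‖T y‖ ^ 2 - ‖y‖ ^ 2 := by
  rw [sub_apply, one_apply_eq_self, inner_sub_left, map_sub, apply_norm_sq_eq_inner_adjoint_left,
    inner_self_eq_norm_sq]
  rfl

theorem expansive_defect_series_le_general {H : Type*} [NormedAddCommGroup H]
    [InnerProductSpace ℂ H] [CompleteSpace H] (T : H →L[ℂ] H)
    (hexp : ∀ x : H, ‖x‖ ≤ ‖T x‖) :
    ∀ x : H,
      (∑' i : ℕ,
        ((inner ℂ (((adjoint T * T - 1)) ((leftInv T ^ (i + 1)) x))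
          ((leftInv T ^ (i + 1)) x) : ℂ)).re)
        ≤ ‖x‖ ^ 2 := by
  intro x
  have hterm (i : ℕ) := re_inner_adjoint_mul_self_sub_one_apply T ((leftInv T ^ (i + 1)) x)
  simp only [RCLike.re_to_complex] at hterm
  refine Real.tsum_le_of_le_sub_succ (g := fun i => ‖(leftInv T ^ i) x‖ ^ 2)
    (fun i => ?_) (fun i => by positivity) (fun i => ?_)
  · rw [hterm, sub_nonneg]
    exact pow_le_pow_left₀ (norm_nonneg _) (hexp _) 2
  · have hstep : T ((leftInv T ^ (i + 1)) x) = T (leftInv T ((leftInv T ^ i) x)) := by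
      rw [pow_succ', mul_apply_eq_comp]
    rw [hterm, hstep]
    have := pow_le_pow_left₀ (norm_nonneg _) (norm_apply_leftInv_apply_le T ((leftInv T ^ i) x)) 2
    linarith

/-- If `T` is left invertible and expansive (`β₁(T) = T*T - I ≥ 0`), then for every `x`,
`Σ_{i=1}^∞ ⟨β₁(T) L_T^i x, L_T^i x⟩ ≤ ‖x‖²`, i.e. `Σ_{i=1}^∞ (L_T*)^i β₁(T) L_T^i ≤ I`. -/
theorem expansive_defect_series_le {H : Type*} [NormedAddCommGroup H]
    [InnerProductSpace ℂ H] [CompleteSpace H] (T : H →L[ℂ] H)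
    (hT : IsUnit (adjoint T * T)) (hexp : ∀ x : H, ‖x‖ ≤ ‖T x‖) :
    ∀ x : H,
      (∑' i : ℕ,
        ((inner ℂ (((adjoint T * T - 1)) ((leftInv T ^ (i + 1)) x))
          ((leftInv T ^ (i + 1)) x) : ℂ)).re)
        ≤ ‖x‖ ^ 2 :=
  expansive_defect_series_le_general T hexp
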